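/- Let a_1, ..., a_n be nonzero integers. The field ℚ(√a_1, ..., √a_n) has degree 2^n over ℚ if and only if a_1, ..., a_n are multiplicatively independent modulo squares, i.e., no product ∏_{j∈J} a_j over a nonempty subset J ⊆ {1,...,n} is a perfect square. -/

import Mathlib

/-!
Adjoining the square roots one at a time, each step has degree at most 2. If
`∏_{j ∈ J} a_j = s²` and `i ∈ J`, then `√a_i = ±s / ∏_{j ∈ J \ {i}} √a_j` already lies in the
field generated by the other roots, so the degree is at most `2^(n-1)`.

Conversely, if `√a ∉ F` and `a ∈ F`, an element `u + v√a` of `F(√a)` whose square lies in `F`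
has `2uv√a ∈ F`, hence `u = 0` or `v = 0`. By induction, every element of `ℚ(√a_j : j ∈ s)`
with rational square is a rational multiple of some `∏_{j ∈ J} √a_j` with `J ⊆ s`; so if
`√a_i` lay in it, `a_i ∏_{j ∈ J} a_j` would be a square. Hence each step has degree exactly 2.
-/

open Polynomial

namespace IntermediateField

variable {K L : Type*} [Field K] [Field L] [Algebra K L]

theorem adjoin_insert_eq_restrictScalars (S : Set L) (x : L) :
    adjoin K (insert x S) = (adjoin K S)⟮x⟯.restrictScalars K := by
  rw [Set.insert_eq, Set.union_comm, adjoin_adjoin_left]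

theorem finrank_adjoin_insert (S : Set L) (x : L) :
    Module.finrank K (adjoin K (insert x S)) =
      Module.finrank K (adjoin K S) * Module.finrank (adjoin K S) (adjoin K S)⟮x⟯ := by
  rw [adjoin_insert_eq_restrictScalars]
  exact (Module.finrank_mul_finrank K (adjoin K S) (adjoin K S)⟮x⟯).symm

variable {F : IntermediateField K L} {x : L}

theorem isIntegral_of_sq_mem (hx : x ^ 2 ∈ F) : IsIntegral F x :=
  ⟨X ^ 2 - C ⟨x ^ 2, hx⟩, monic_X_pow_sub_C _ two_ne_zero, by simp⟩

theorem finrank_adjoin_simple_le_two_of_sq_mem (hx : x ^ 2 ∈ F) :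
    Module.finrank F F⟮x⟯ ≤ 2 := by
  rw [adjoin.finrank (isIntegral_of_sq_mem hx)]
  calc (minpoly F x).natDegree ≤ (X ^ 2 - C (⟨x ^ 2, hx⟩ : F)).natDegree :=
        natDegree_le_of_dvd (minpoly.dvd F x (by simp)) (X_pow_sub_C_ne_zero two_pos _)
    _ = 2 := natDegree_X_pow_sub_C

theorem finrank_adjoin_simple_eq_two_of_sq_mem (hx : x ^ 2 ∈ F) (hxF : x ∉ F) :
    Module.finrank F F⟮x⟯ = 2 := by
  have hne : Module.finrank F F⟮x⟯ ≠ 1 := fun h ↦ by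
    obtain ⟨y, rfl⟩ := mem_bot.mp (finrank_adjoin_simple_eq_one_iff.mp h)
    exact hxF y.2
  have := adjoin.finiteDimensional (isIntegral_of_sq_mem hx)
  have := finrank_adjoin_simple_le_two_of_sq_mem hx
  have := Module.finrank_pos (R := F) (M := F⟮x⟯)
  omega

theorem exists_eq_add_mul_of_mem_adjoin_simple (hx : x ^ 2 ∈ F) {t : L} (ht : t ∈ F⟮x⟯) :
    ∃ u ∈ F, ∃ v ∈ F, t = u + v * x := by
  rw [← mem_toSubalgebra, adjoin_simple_toSubalgebra_of_isAlgebraic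
    (isIntegral_of_sq_mem hx).isAlgebraic] at ht
  induction ht using Algebra.adjoin_induction with
  | mem y hy => exact ⟨0, zero_mem F, 1, one_mem F, by simp [Set.mem_singleton_iff.mp hy]⟩
  | algebraMap u => exact ⟨u, u.2, 0, zero_mem F, by simp⟩
  | add _ _ _ _ h₁ h₂ =>
    obtain ⟨u₁, hu₁, v₁, hv₁, rfl⟩ := h₁
    obtain ⟨u₂, hu₂, v₂, hv₂, rfl⟩ := h₂
    exact ⟨u₁ + u₂, add_mem hu₁ hu₂, v₁ + v₂, add_mem hv₁ hv₂, by ring⟩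
  | mul _ _ _ _ h₁ h₂ =>
    obtain ⟨u₁, hu₁, v₁, hv₁, rfl⟩ := h₁
    obtain ⟨u₂, hu₂, v₂, hv₂, rfl⟩ := h₂
    refine ⟨u₁ * u₂ + v₁ * v₂ * x ^ 2, ?_, u₁ * v₂ + v₁ * u₂, ?_, by ring⟩
    · exact add_mem (mul_mem hu₁ hu₂) (mul_mem (mul_mem hv₁ hv₂) hx)
    · exact add_mem (mul_mem hu₁ hv₂) (mul_mem hv₁ hu₂)

theorem mem_or_exists_eq_mul_of_sq_mem [NeZero (2 : L)] (hx : x ^ 2 ∈ F) (hxF : x ∉ F)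
    {t : L} (ht : t ∈ F⟮x⟯) (ht2 : t ^ 2 ∈ F) : t ∈ F ∨ ∃ y ∈ F, t = y * x := by
  obtain ⟨u, hu, v, hv, rfl⟩ := exists_eq_add_mul_of_mem_adjoin_simple hx ht
  have hcross : 2 * u * v * x ∈ F := by
    have := sub_mem (sub_mem ht2 (pow_mem hu 2)) (mul_mem (pow_mem hv 2) hx)
    convert this using 1
    ring
  by_cases huv : u * v = 0
  · rcases mul_eq_zero.mp huv with rfl | rfl
    · exact .inr ⟨v, hv, zero_add _⟩
    · exact .inl (by simpa using hu)
  · refine absurd ?_ hxF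
    have h2uv : 2 * u * v ≠ 0 := by simpa [mul_assoc, two_ne_zero] using huv
    simpa [h2uv] using div_mem hcross (mul_mem (mul_mem (ofNat_mem F 2) hu) hv)

section SquareRoots

open Finset

variable {ι : Type*} {r : ι → L} {c : ι → K}

theorem sq_mem_of_sq_eq_algebraMap (hr : ∀ i, r i ^ 2 = algebraMap K L (c i))
    (F : IntermediateField K L) (i : ι) : r i ^ 2 ∈ F :=
  hr i ▸ F.algebraMap_mem (c i)

theorem finrank_adjoin_image_le (hr : ∀ i, r i ^ 2 = algebraMap K L (c i)) (s : Finset ι) :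
    Module.finrank K (adjoin K (r '' s)) ≤ 2 ^ s.card := by
  classical
  induction s using Finset.induction_on with
  | empty =>
    rw [coe_empty, Set.image_empty, adjoin_empty, IntermediateField.finrank_bot, card_empty,
      pow_zero]
  | insert i s hi ih =>
    rw [coe_insert, Set.image_insert_eq, finrank_adjoin_insert, card_insert_of_notMem hi,
      pow_succ]
    exact Nat.mul_le_mul ih
      (finrank_adjoin_simple_le_two_of_sq_mem (sq_mem_of_sq_eq_algebraMap hr _ i))

theorem isSquare_mul_prod_of_eq_mul_prod (hr : ∀ i, r i ^ 2 = algebraMap K L (c i)) {i : ι}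
    {J : Finset ι} {k : K} (h : r i = algebraMap K L k * ∏ j ∈ J, r j) :
    IsSquare (c i * ∏ j ∈ J, c j) := by
  have hci : c i = k ^ 2 * ∏ j ∈ J, c j := (algebraMap K L).injective <| by
    simp only [← hr, h, map_mul, map_pow, map_prod, mul_pow, ← prod_pow]
  exact ⟨k * ∏ j ∈ J, c j, by rw [hci]; ring⟩

theorem notMem_adjoin_image_of_forall_not_isSquare [DecidableEq ι]
    (hr : ∀ i, r i ^ 2 = algebraMap K L (c i)) {s : Finset ι} {i : ι} (hi : i ∉ s)
    (hc : ∀ J ⊆ insert i s, J.Nonempty → ¬IsSquare (∏ j ∈ J, c j))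
    (hcl : r i ∈ adjoin K (r '' s) → ∃ J ⊆ s, ∃ k : K, r i = algebraMap K L k * ∏ j ∈ J, r j) :
    r i ∉ adjoin K (r '' s) := fun h ↦ by
  obtain ⟨J, hJ, k, hk⟩ := hcl h
  refine hc (insert i J) (insert_subset_insert i hJ) (insert_nonempty i J) ?_
  rw [prod_insert fun hiJ ↦ hi (hJ hiJ)]
  exact isSquare_mul_prod_of_eq_mul_prod hr hk

theorem exists_eq_mul_prod_of_sq_mem_bot [NeZero (2 : L)]
    (hr : ∀ i, r i ^ 2 = algebraMap K L (c i)) (s : Finset ι)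
    (hc : ∀ J ⊆ s, J.Nonempty → ¬IsSquare (∏ j ∈ J, c j)) {t : L}
    (ht : t ∈ adjoin K (r '' s)) (ht2 : t ^ 2 ∈ (⊥ : IntermediateField K L)) :
    ∃ J ⊆ s, ∃ k : K, t = algebraMap K L k * ∏ j ∈ J, r j := by
  classical
  induction s using Finset.induction_on generalizing t with
  | empty =>
    obtain ⟨k, rfl⟩ := mem_bot.mp (by simpa using ht)
    exact ⟨∅, subset_rfl, k, by simp⟩
  | insert i s hi ih =>
    have hc' : ∀ J ⊆ s, J.Nonempty → ¬IsSquare (∏ j ∈ J, c j) :=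
      fun J hJ ↦ hc J (hJ.trans (subset_insert i s))
    set F := adjoin K (r '' s)
    have hri : r i ∉ F := notMem_adjoin_image_of_forall_not_isSquare hr hi hc
      fun h ↦ ih hc' h (sq_mem_of_sq_eq_algebraMap hr ⊥ i)
    rw [coe_insert, Set.image_insert_eq, adjoin_insert_eq_restrictScalars] at ht
    rcases mem_or_exists_eq_mul_of_sq_mem (sq_mem_of_sq_eq_algebraMap hr F i) hri ht
      (bot_le (a := F) ht2) with htF | ⟨y, hy, rfl⟩
    · obtain ⟨J, hJ, k, rfl⟩ := ih hc' htF ht2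
      exact ⟨J, hJ.trans (subset_insert i s), k, rfl⟩
    · have hci : algebraMap K L (c i) ≠ 0 := by
        rw [← hr]
        exact pow_ne_zero 2 fun h ↦ hri (h ▸ zero_mem F)
      have hy2 : y ^ 2 = (y * r i) ^ 2 / algebraMap K L (c i) := by
        rw [mul_pow, hr, mul_div_cancel_right₀ _ hci]
      obtain ⟨J, hJ, k, rfl⟩ := ih hc' hy (hy2 ▸ div_mem ht2 (algebraMap_mem ⊥ (c i)))
      refine ⟨insert i J, insert_subset_insert i hJ, k, ?_⟩
      rw [prod_insert fun hiJ ↦ hi (hJ hiJ)]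
      ring

theorem finrank_adjoin_image_eq_two_pow [NeZero (2 : L)]
    (hr : ∀ i, r i ^ 2 = algebraMap K L (c i)) (s : Finset ι)
    (hc : ∀ J ⊆ s, J.Nonempty → ¬IsSquare (∏ j ∈ J, c j)) :
    Module.finrank K (adjoin K (r '' s)) = 2 ^ s.card := by
  classical
  induction s using Finset.induction_on with
  | empty => simp [adjoin_empty]
  | insert i s hi ih =>
    have hc' : ∀ J ⊆ s, J.Nonempty → ¬IsSquare (∏ j ∈ J, c j) :=
      fun J hJ ↦ hc J (hJ.trans (subset_insert i s))
    have hri : r i ∉ adjoin K (r '' s) := notMem_adjoin_image_of_forall_not_isSquare hr hi hc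
      fun h ↦ exists_eq_mul_prod_of_sq_mem_bot hr s hc' h (sq_mem_of_sq_eq_algebraMap hr ⊥ i)
    rw [coe_insert, Set.image_insert_eq, finrank_adjoin_insert, ih hc',
      finrank_adjoin_simple_eq_two_of_sq_mem (sq_mem_of_sq_eq_algebraMap hr _ i) hri,
      card_insert_of_notMem hi, pow_succ]

theorem finrank_adjoin_range_lt_two_pow [Fintype ι] (hr : ∀ i, r i ^ 2 = algebraMap K L (c i))
    (hc0 : ∀ i, c i ≠ 0) {J : Finset ι} (hJ : J.Nonempty) (hsq : IsSquare (∏ j ∈ J, c j)) :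
    Module.finrank K (adjoin K (Set.range r)) < 2 ^ Fintype.card ι := by
  classical
  obtain ⟨i, hi⟩ := hJ
  obtain ⟨s, hs⟩ := hsq
  set F := adjoin K (r '' ↑(univ.erase i))
  have hmem : ∀ j ≠ i, r j ∈ F := fun j hj ↦ subset_adjoin K _ ⟨j, by simpa using hj, rfl⟩
  set P := ∏ j ∈ J.erase i, r j
  have hP : P ∈ F := prod_mem fun j hj ↦ hmem j (ne_of_mem_erase hj)
  have hP0 : P ≠ 0 := prod_ne_zero_iff.mpr fun j _ h ↦ hc0 j <| (algebraMap K L).injective <| by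
    rw [← hr, h, map_zero, zero_pow two_ne_zero]
  have hriP_sq : (r i * P) ^ 2 = algebraMap K L s ^ 2 := by
    rw [mul_prod_erase J r hi, ← prod_pow, prod_congr rfl fun j _ ↦ hr j, ← map_prod, hs,
      map_mul, sq]
  have hri : r i ∈ F := by
    have hriP : r i * P ∈ F := by
      rcases sq_eq_sq_iff_eq_or_eq_neg.mp hriP_sq with h | h <;> rw [h]
      exacts [algebraMap_mem F s, neg_mem (algebraMap_mem F s)]
    simpa [hP0] using div_mem hriP hP
  have hrange : adjoin K (Set.range r) = F :=
    le_antisymm (adjoin_le_iff.mpr <| Set.range_subset_iff.mpr fun j ↦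
        if hj : j = i then hj ▸ hri else hmem j hj)
      (adjoin.mono _ _ _ (Set.image_subset_range _ _))
  calc Module.finrank K (adjoin K (Set.range r)) = Module.finrank K F := by rw [hrange]
    _ ≤ 2 ^ (univ.erase i).card := finrank_adjoin_image_le hr _
    _ < 2 ^ Fintype.card ι := by
      rw [card_erase_of_mem (mem_univ i), card_univ]
      exact Nat.pow_lt_pow_right one_lt_two (Nat.sub_lt (Fintype.card_pos_iff.mpr ⟨i⟩) one_pos)

theorem finrank_adjoin_range_eq_two_pow_iff [NeZero (2 : L)] [Fintype ι]
    (hr : ∀ i, r i ^ 2 = algebraMap K L (c i)) (hc0 : ∀ i, c i ≠ 0) :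
    Module.finrank K (adjoin K (Set.range r)) = 2 ^ Fintype.card ι ↔
      ∀ J : Finset ι, J.Nonempty → ¬IsSquare (∏ j ∈ J, c j) := by
  refine ⟨fun h J hJ hsq ↦ (finrank_adjoin_range_lt_two_pow hr hc0 hJ hsq).ne h, fun hc ↦ ?_⟩
  rw [← Set.image_univ, ← coe_univ, finrank_adjoin_image_eq_two_pow hr univ fun J _ ↦ hc J,
    card_univ]

end SquareRoots

end IntermediateField

theorem stmt_6 (n : ℕ) (a : Fin n → ℤ) (ha : ∀ i, a i ≠ 0)
    (r : Fin n → ℂ) (hr : ∀ i, r i ^ 2 = (a i : ℂ)) :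
    Module.finrank ℚ (IntermediateField.adjoin ℚ (Set.range r)) = 2 ^ n ↔
      ∀ J : Finset (Fin n), J.Nonempty → ¬∃ s : ℤ, ∏ j ∈ J, a j = s ^ 2 := by
  have hr' : ∀ i, r i ^ 2 = algebraMap ℚ ℂ (a i) := fun i ↦ by simp [hr]
  have key := IntermediateField.finrank_adjoin_range_eq_two_pow_iff hr'
    fun i ↦ Int.cast_ne_zero.mpr (ha i)
  rw [Fintype.card_fin] at key
  rw [key]
  simp_rw [← Int.cast_prod, Rat.isSquare_intCast_iff, isSquare_iff_exists_sq]
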